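/- Let Γ be of spherical type, and let u,v ∈ W, X,Y ⊆ S with u (∅,X)-minimal, v (∅,Y)-minimal, and uW_Xu⁻¹ = vW_Yv⁻¹. Then ⟨u(α_s), v(o) − u(o)⟩ = 0 for every s ∈ X; equivalently, every element of the common subgroup uW_Xu⁻¹ = vW_Yv⁻¹ fixes the vector v(o) − u(o). -/

import Mathlib

/-!
Context: `(W, S)` is a Coxeter system for the Coxeter matrix `M` (Mathlib's convention:
the entry `0` encodes `∞`).  `V = ⊕_{s ∈ S} ℝ·α_s` is realized as `S →₀ ℝ` with
`α_s = simpleRoot s`, equipped with the canonical symmetric bilinear form `bform M`.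
The canonical faithful form-preserving representation `ρ : W →* GL(V)` and the map
`β ↦ r_β` assigning to each root its reflection are given as data, characterized by
the usual formulas (`hρ`, `hρinj`, `hρform`, `hr` below).
-/

noncomputable section

open scoped Real Pointwise

variable {S W : Type*}

/-- The simple root `α_s`. -/
def simpleRoot (s : S) : S →₀ ℝ := Finsupp.single s 1

/-- The entry `⟨α_s, α_t⟩ = -cos (π / m_{s,t})` of the canonical bilinear form,
interpreted as `-1` when `m_{s,t} = ∞` (encoded by `0`). -/
def formEntry (M : CoxeterMatrix S) (s t : S) : ℝ :=
  if M s t = 0 then -1 else -Real.cos (Real.pi / (M s t : ℝ))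

/-- The canonical symmetric bilinear form on `V = ⊕_{s ∈ S} ℝ·α_s`. -/
def bform (M : CoxeterMatrix S) : (S →₀ ℝ) →ₗ[ℝ] (S →₀ ℝ) →ₗ[ℝ] ℝ :=
  Finsupp.basisSingleOne.constr ℝ fun s =>
    Finsupp.basisSingleOne.constr ℝ fun t => formEntry M s t

variable [Group W]

/-- The root system `Φ = { w (α_s) : w ∈ W, s ∈ S }`. -/
def rootSystem (ρ : W →* ((S →₀ ℝ) ≃ₗ[ℝ] (S →₀ ℝ))) : Set (S →₀ ℝ) :=
  Set.range fun p : W × S => ρ p.1 (simpleRoot p.2)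

/-- A subset `𝒳 ⊆ V` is almost parabolic (AP): (AP1) the vectors of `𝒳` are linearly
independent, and (AP2) any two elements of `𝒳` are of the form `w (α_s)`, `w (α_t)` for a
common `w ∈ W`. -/
def IsAP (ρ : W →* ((S →₀ ℝ) ≃ₗ[ℝ] (S →₀ ℝ))) (𝒳 : Set (S →₀ ℝ)) : Prop :=
  LinearIndependent ℝ ((↑) : 𝒳 → (S →₀ ℝ)) ∧
    ∀ β ∈ 𝒳, ∀ γ ∈ 𝒳, ∃ (w : W) (s t : S),
      ρ w (simpleRoot s) = β ∧ ρ w (simpleRoot t) = γ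

/-- `g ∈ W` is a product of `n` elements of `T`. -/
def HasLen (T : Set W) (g : W) (n : ℕ) : Prop :=
  ∃ l : List W, (∀ x ∈ l, x ∈ T) ∧ l.prod = g ∧ l.length = n

/-- `u` has minimal word length (w.r.t. the generating set `T`) in the coset `u·H`. -/
def MinimalInCoset (T : Set W) (H : Subgroup W) (u : W) : Prop :=
  ∀ h ∈ H, ∀ m, HasLen T (u * h) m → ∃ n ≤ m, HasLen T u n

/-!
Minimality of `u` and `v` makes `u(α_s)` (`s ∈ X`) and `v(α_t)` (`t ∈ Y`) positive roots. As
`v⁻¹u` conjugates the reflection `s` into `W_Y`, the root `β_s = v⁻¹u(α_s)` lies in `V_Y`; it is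
positive, since `v` maps nonnegative vectors of `V_Y` to nonnegative vectors and `v(β_s) = u(α_s)`.
Symmetrically `γ_t = u⁻¹v(α_t)` is a positive root in `V_X`. Every positive root has height
`⟨·, o⟩ ≥ 1` (`W` is finite), so `1 = ht(α_s) = Σ_t β_s(t) ht(γ_t) ≥ ht(β_s) ≥ 1`. Hence
`⟨u(α_s), v(o)⟩ = ht(β_s) = 1 = ⟨u(α_s), u(o)⟩`.
-/

open CoxeterSystem

variable {M : CoxeterMatrix S}

lemma formEntry_self (M : CoxeterMatrix S) (s : S) : formEntry M s s = 1 := by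
  simp [formEntry]

lemma formEntry_comm (M : CoxeterMatrix S) (s t : S) : formEntry M s t = formEntry M t s := by
  rw [formEntry, formEntry, M.symmetric]

lemma simpleRoot_eq_basisSingleOne (s : S) : simpleRoot s = Finsupp.basisSingleOne s := by
  simp [simpleRoot]

lemma bform_simpleRoot_simpleRoot (M : CoxeterMatrix S) (s t : S) :
    bform M (simpleRoot s) (simpleRoot t) = formEntry M s t := by
  simp only [bform, simpleRoot_eq_basisSingleOne, Module.Basis.constr_basis]

lemma bform_simpleRoot_self (M : CoxeterMatrix S) (s : S) :
    bform M (simpleRoot s) (simpleRoot s) = 1 := by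
  rw [bform_simpleRoot_simpleRoot, formEntry_self]

lemma bform_comm (M : CoxeterMatrix S) (x y : S →₀ ℝ) : bform M x y = bform M y x := by
  suffices bform M = (bform M).flip from LinearMap.congr_fun₂ this x y
  refine Finsupp.basisSingleOne.ext fun s => Finsupp.basisSingleOne.ext fun t => ?_
  simp only [LinearMap.flip_apply, ← simpleRoot_eq_basisSingleOne, bform_simpleRoot_simpleRoot,
    formEntry_comm]

lemma sum_smul_simpleRoot (x : S →₀ ℝ) : (x.sum fun t c => c • simpleRoot t) = x := by
  simp [simpleRoot, Finsupp.smul_single, Finsupp.sum_single]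

lemma bform_eq_sum (M : CoxeterMatrix S) (x y : S →₀ ℝ) :
    bform M x y = x.sum fun t c => c * bform M (simpleRoot t) y := by
  conv_lhs => rw [← sum_smul_simpleRoot x]
  simp [Finsupp.sum]

def height : (S →₀ ℝ) →ₗ[ℝ] ℝ := Finsupp.linearCombination ℝ fun _ => 1

lemma height_apply (x : S →₀ ℝ) : height x = x.sum fun _ c => c := by
  simp [height, Finsupp.linearCombination_apply]

lemma height_simpleRoot (s : S) : height (simpleRoot s) = 1 := by
  simp [height, simpleRoot]

lemma bform_eq_height {o : S →₀ ℝ} (ho : ∀ t : S, bform M o (simpleRoot t) = 1)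
    (x : S →₀ ℝ) : bform M x o = height x := by
  rw [bform_eq_sum, height_apply]
  exact Finsupp.sum_congr fun t _ => by rw [bform_comm, ho, mul_one]

lemma apply_nonneg_of_mem_supported (f : (S →₀ ℝ) →ₗ[ℝ] (S →₀ ℝ)) {Y : Set S}
    (hf : ∀ t ∈ Y, 0 ≤ f (simpleRoot t)) {x : S →₀ ℝ} (hx : 0 ≤ x)
    (hxY : x ∈ Finsupp.supported ℝ ℝ Y) : 0 ≤ f x := by
  rw [← sum_smul_simpleRoot x, map_finsuppSum]
  refine Finset.sum_nonneg fun t ht => ?_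
  simp only [map_smul]
  exact smul_nonneg (hx t) (hf t (hxY ht))

lemma conj_mem_of_map_conj_eq {G : Type*} [Group G] {u v : G} {H K : Subgroup G}
    (h : H.map (MulAut.conj u).toMonoidHom = K.map (MulAut.conj v).toMonoidHom)
    {x : G} (hx : x ∈ H) : v⁻¹ * u * x * (v⁻¹ * u)⁻¹ ∈ K := by
  obtain ⟨y, hy, hyx⟩ : u * x * u⁻¹ ∈ K.map (MulAut.conj v).toMonoidHom :=
    h ▸ ⟨x, hx, by simp [MulAut.conj_apply]⟩
  simp only [MulEquiv.coe_toMonoidHom, MulAut.conj_apply] at hyx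
  have hxy : v⁻¹ * u * x * (v⁻¹ * u)⁻¹ = y := by
    rw [show y = v⁻¹ * (v * y * v⁻¹) * v by group, hyx]
    group
  exact hxy ▸ hy

namespace CoxeterSystem

variable (cs : CoxeterSystem M W)

lemma not_isRightDescent_of_forall_length_le {u : W} {X : Set S}
    (hu : ∀ g ∈ Subgroup.closure (cs.simple '' X), cs.length u ≤ cs.length (u * g))
    {s : S} (hs : s ∈ X) : ¬cs.IsRightDescent u s :=
  (hu _ (Subgroup.subset_closure ⟨s, hs, rfl⟩)).not_gt

lemma isRightDescent_mul_alternatingWord {p : W} {a b : S} {k : ℕ} (hk : k ≠ 0)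
    (hlen : cs.length (p * cs.wordProd (alternatingWord a b k)) = cs.length p + k) :
    cs.IsRightDescent (p * cs.wordProd (alternatingWord a b k)) b := by
  obtain ⟨k, rfl⟩ := Nat.exists_eq_succ_of_ne_zero hk
  have hmul : p * cs.wordProd (alternatingWord a b (k + 1)) * cs.simple b =
      p * cs.wordProd (alternatingWord b a k) := by
    rw [alternatingWord_succ, wordProd_concat, ← mul_assoc, simple_mul_simple_cancel_right]
  have h₁ := cs.length_mul_le p (cs.wordProd (alternatingWord b a k))
  have h₂ := cs.length_wordProd_le (alternatingWord b a k)
  rw [length_alternatingWord] at h₂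
  rw [IsRightDescent, hmul, hlen]
  omega

lemma exists_mul_alternatingWord (s t : S) (w : W) :
    ∃ (p : W) (a b : S) (k : ℕ), (a = s ∧ b = t ∨ a = t ∧ b = s) ∧
      w = p * cs.wordProd (alternatingWord a b k) ∧ cs.length w = cs.length p + k ∧
      ¬cs.IsRightDescent p s ∧ ¬cs.IsRightDescent p t := by
  induction hn : cs.length w using Nat.strong_induction_on generalizing w with
  | _ n ih =>
  by_cases hdesc : cs.IsRightDescent w s ∨ cs.IsRightDescent w t
  swap
  · push Not at hdesc
    exact ⟨w, s, t, 0, .inl ⟨rfl, rfl⟩, by simp [alternatingWord], by simp [hn],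
      hdesc.1, hdesc.2⟩
  obtain ⟨j, hj, hjw⟩ : ∃ j, (j = s ∨ j = t) ∧ cs.IsRightDescent w j := by
    rcases hdesc with h | h
    exacts [⟨s, .inl rfl, h⟩, ⟨t, .inr rfl, h⟩]
  have hlen := cs.isRightDescent_iff.mp hjw
  obtain ⟨p, a, b, k, hab, hw, hlen', hps, hpt⟩ := ih _ (by omega) (w * cs.simple j) rfl
  have hw' : w = p * cs.wordProd (alternatingWord a b k) * cs.simple j := by
    rw [← hw, simple_mul_simple_cancel_right]
  have hja : j = a ∨ j = b := by rcases hab with ⟨rfl, rfl⟩ | ⟨rfl, rfl⟩ <;> tauto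
  rcases hja with rfl | rfl
  · refine ⟨p, b, j, k + 1, by tauto, ?_, by omega, hps, hpt⟩
    rw [hw', alternatingWord_succ, wordProd_concat, mul_assoc]
  rcases Nat.eq_zero_or_pos k with rfl | hk
  · refine ⟨p, a, j, 1, hab, by simpa [alternatingWord] using hw', by simp at hlen'; omega,
      hps, hpt⟩
  · rw [hw] at hlen'
    have := cs.isRightDescent_mul_alternatingWord hk.ne' hlen'
    rw [IsRightDescent, ← hw, simple_mul_simple_cancel_right] at this
    omega

lemma lt_of_not_isRightDescent_mul_alternatingWord {p : W} {s t : S} {k : ℕ}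
    (hlen : cs.length (p * cs.wordProd (alternatingWord s t k)) = cs.length p + k)
    (hs : ¬cs.IsRightDescent (p * cs.wordProd (alternatingWord s t k)) s) :
    M s t = 0 ∨ k < M s t := by
  by_contra! h
  obtain ⟨h0, hle⟩ := h
  rcases hle.lt_or_eq with hlt | rfl
  · refine cs.not_isReduced_alternatingWord s t h0 hlt ?_
    have h₁ := cs.length_mul_le p (cs.wordProd (alternatingWord s t k))
    have h₂ := cs.length_wordProd_le (alternatingWord s t k)
    rw [length_alternatingWord] at h₂
    rw [IsReduced, length_alternatingWord]
    omega
  · have hbraid : cs.wordProd (alternatingWord s t (M s t)) =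
        cs.wordProd (alternatingWord t s (M s t)) := by
      have h := cs.wordProd_braidWord_eq s t
      rwa [braidWord, braidWord, M.symmetric t s] at h
    rw [hbraid] at hlen hs
    exact hs (cs.isRightDescent_mul_alternatingWord h0 hlen)

end CoxeterSystem

-- The coefficients of alternating words `⋯ s t` acting on `α_s` (`alternatingWord_apply_simpleRoot`).
lemma exists_dihedral_coeff {s t : S} (hst : s ≠ t) :
    ∃ a : ℕ → ℝ, a 0 = 0 ∧ a 1 = 1 ∧
      (∀ k, a (k + 2) = -2 * formEntry M s t * a (k + 1) - a k) ∧
      ∀ k, (M s t = 0 ∨ k ≤ M s t) → 0 ≤ a k := by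
  by_cases h0 : M s t = 0
  · refine ⟨fun k => k, by simp, by simp, fun k => ?_, fun k _ => by positivity⟩
    simp only [formEntry, if_pos h0]
    push_cast
    ring
  have hm : 2 ≤ M s t := by have := M.off_diagonal s t hst; omega
  set θ := π / M s t with hθ
  have hθ_pos : 0 < θ := div_pos Real.pi_pos (by positivity)
  have hθ_le : θ ≤ π / 2 := div_le_div_of_nonneg_left Real.pi_pos.le (by norm_num)
    (by exact_mod_cast hm)
  have hsin : 0 < Real.sin θ := Real.sin_pos_of_pos_of_lt_pi hθ_pos (by linarith [Real.pi_pos])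
  refine ⟨fun k => Real.sin (k * θ) / Real.sin θ, by simp, by simp [hsin.ne'], fun k => ?_,
    fun k hk => div_nonneg (Real.sin_nonneg_of_nonneg_of_le_pi (by positivity) ?_) hsin.le⟩
  · simp only [formEntry, if_neg h0, ← hθ]
    push_cast
    have h₂ : ((k : ℝ) + 2) * θ = (k + 1) * θ + θ := by ring
    have h₀ : (k : ℝ) * θ = (k + 1) * θ - θ := by ring
    rw [h₂, h₀, Real.sin_add, Real.sin_sub]
    field_simp
    ring
  · have hk' : (k : ℝ) ≤ M s t := by exact_mod_cast hk.resolve_left h0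
    calc (k : ℝ) * θ ≤ M s t * θ := by gcongr
      _ = π := by rw [hθ]; field_simp

section LinearRep

variable {G R V : Type*} [Group G] [Semiring R] [AddCommMonoid V] [Module R V]

lemma linearRep_apply_mul (ρ : G →* (V ≃ₗ[R] V)) (g₁ g₂ : G) (x : V) :
    ρ (g₁ * g₂) x = ρ g₁ (ρ g₂ x) := by
  rw [map_mul, LinearEquiv.mul_apply]

lemma linearRep_inv_apply_apply (ρ : G →* (V ≃ₗ[R] V)) (g : G) (x : V) : ρ g⁻¹ (ρ g x) = x := by
  rw [← linearRep_apply_mul, inv_mul_cancel, map_one]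
  rfl

lemma linearRep_apply_inv_apply (ρ : G →* (V ≃ₗ[R] V)) (g : G) (x : V) : ρ g (ρ g⁻¹ x) = x := by
  simpa only [inv_inv] using linearRep_inv_apply_apply ρ g⁻¹ x

end LinearRep

def IsReflectionRep (cs : CoxeterSystem M W) (ρ : W →* ((S →₀ ℝ) ≃ₗ[ℝ] (S →₀ ℝ))) : Prop :=
  ∀ (s : S) (v : S →₀ ℝ), ρ (cs.simple s) v = v - (2 * bform M (simpleRoot s) v) • simpleRoot s

namespace IsReflectionRep

variable {cs : CoxeterSystem M W} {ρ : W →* ((S →₀ ℝ) ≃ₗ[ℝ] (S →₀ ℝ))}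

lemma bform_map (hρ : IsReflectionRep cs ρ) (w : W) (x y : S →₀ ℝ) :
    bform M (ρ w x) (ρ w y) = bform M x y := by
  induction w using cs.simple_induction_left with
  | one => simp
  | mul_simple_left w s ih =>
    rw [linearRep_apply_mul, linearRep_apply_mul, hρ, hρ, ← ih]
    simp only [map_sub, map_smul, LinearMap.sub_apply, LinearMap.smul_apply, smul_eq_mul,
      bform_simpleRoot_self, bform_comm M _ (simpleRoot s)]
    ring

lemma apply_simpleRoot_ne_zero (hρ : IsReflectionRep cs ρ) (w : W) (s : S) :
    ρ w (simpleRoot s) ≠ 0 := fun h => by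
  simpa [h, bform_simpleRoot_self] using hρ.bform_map w (simpleRoot s) (simpleRoot s)

lemma simple_apply_simpleRoot (hρ : IsReflectionRep cs ρ) (s : S) :
    ρ (cs.simple s) (simpleRoot s) = -simpleRoot s := by
  rw [hρ, bform_simpleRoot_self]
  module

lemma conj_simple_apply (hρ : IsReflectionRep cs ρ) (w : W) (s : S) (x : S →₀ ℝ) :
    ρ (w * cs.simple s * w⁻¹) x =
      x - (2 * bform M (ρ w (simpleRoot s)) x) • ρ w (simpleRoot s) := by
  obtain ⟨y, rfl⟩ : ∃ y, x = ρ w y := ⟨ρ w⁻¹ x, (linearRep_apply_inv_apply ρ w x).symm⟩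
  rw [linearRep_apply_mul, linearRep_apply_mul, linearRep_inv_apply_apply, hρ, map_sub, map_smul,
    hρ.bform_map]

lemma apply_sub_self_mem_supported (hρ : IsReflectionRep cs ρ) {X : Set S} {g : W}
    (hg : g ∈ Subgroup.closure (cs.simple '' X)) (x : S →₀ ℝ) :
    ρ g x - x ∈ Finsupp.supported ℝ ℝ X := by
  induction hg using Subgroup.closure_induction generalizing x with
  | mem g hg =>
    obtain ⟨s, hs, rfl⟩ := hg
    rw [hρ, sub_sub_cancel_left, ← neg_smul]
    exact Submodule.smul_mem _ _ (Finsupp.single_mem_supported ℝ 1 hs)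
  | one => simp
  | mul g h _ _ hg hh =>
    rw [linearRep_apply_mul, ← sub_add_sub_cancel]
    exact add_mem (hg _) (hh _)
  | inv g _ hg =>
    simpa [linearRep_inv_apply_apply] using neg_mem (hg (ρ g⁻¹ x))

lemma alternatingWord_apply_simpleRoot (hρ : IsReflectionRep cs ρ) {s t : S} {a : ℕ → ℝ}
    (h₀ : a 0 = 0) (h₁ : a 1 = 1) (hrec : ∀ k, a (k + 2) = -2 * formEntry M s t * a (k + 1) - a k)
    (k : ℕ) :
    ρ (cs.wordProd (alternatingWord s t k)) (simpleRoot s) =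
      if Even k then a (k + 1) • simpleRoot s + a k • simpleRoot t
      else a k • simpleRoot s + a (k + 1) • simpleRoot t := by
  induction k with
  | zero => simp [alternatingWord, h₀, h₁, LinearEquiv.coe_one]
  | succ k ih =>
    rw [alternatingWord_succ', wordProd_cons, linearRep_apply_mul, ih]
    by_cases hk : Even k
    · simp only [hk, Nat.even_add_one, not_true_eq_false, if_true, if_false]
      rw [hρ]
      simp only [map_add, map_smul, smul_eq_mul, bform_simpleRoot_simpleRoot, formEntry_self,
        formEntry_comm M t s, hrec]
      module
    · simp only [hk, Nat.even_add_one, not_false_eq_true, if_true, if_false]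
      rw [hρ]
      simp only [map_add, map_smul, smul_eq_mul, bform_simpleRoot_simpleRoot, formEntry_self, hrec]
      module

lemma mul_alternatingWord_apply_simpleRoot_nonneg (hρ : IsReflectionRep cs ρ) {p : W} {s t : S}
    (hst : s ≠ t) {k : ℕ} (hk : M s t = 0 ∨ k < M s t) (hs : 0 ≤ ρ p (simpleRoot s))
    (ht : 0 ≤ ρ p (simpleRoot t)) :
    0 ≤ ρ (p * cs.wordProd (alternatingWord s t k)) (simpleRoot s) := by
  obtain ⟨a, h₀, h₁, hrec, ha⟩ := exists_dihedral_coeff (M := M) hst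
  have hk₀ : 0 ≤ a k := ha k (by omega)
  have hk₁ : 0 ≤ a (k + 1) := ha (k + 1) (by omega)
  rw [linearRep_apply_mul, hρ.alternatingWord_apply_simpleRoot h₀ h₁ hrec]
  split_ifs <;> simp only [map_add, map_smul] <;> positivity

/-- Write `w = p · d` with `d` alternating in `s` and a right descent `t` of `w`, and `p` having
neither as a right descent; then `d(α_s)` is a nonnegative combination of `α_s` and `α_t`, and
induction on the length applies to `p`. -/
theorem apply_simpleRoot_nonneg (hρ : IsReflectionRep cs ρ) {w : W} {s : S}
    (hs : ¬cs.IsRightDescent w s) : 0 ≤ ρ w (simpleRoot s) := by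
  induction hn : cs.length w using Nat.strong_induction_on generalizing w s with
  | _ n ih =>
  rcases eq_or_ne w 1 with rfl | hw
  · simp [simpleRoot]
  obtain ⟨t, ht⟩ := cs.exists_rightDescent_of_ne_one hw
  have hst : s ≠ t := by rintro rfl; exact hs ht
  obtain ⟨p, a, b, k, hab, rfl, hlen, hps, hpt⟩ := cs.exists_mul_alternatingWord s t w
  have hk : k ≠ 0 := by rintro rfl; simp [alternatingWord] at ht; exact hpt ht
  rcases hab with ⟨rfl, rfl⟩ | ⟨rfl, rfl⟩
  · exact hρ.mul_alternatingWord_apply_simpleRoot_nonneg hst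
      (cs.lt_of_not_isRightDescent_mul_alternatingWord hlen hs)
      (ih _ (by omega) hps rfl) (ih _ (by omega) hpt rfl)
  · exact absurd (cs.isRightDescent_mul_alternatingWord hk hlen) hs

lemma apply_simpleRoot_nonneg_or_nonpos (hρ : IsReflectionRep cs ρ) (w : W) (s : S) :
    0 ≤ ρ w (simpleRoot s) ∨ ρ w (simpleRoot s) ≤ 0 := by
  by_cases hs : cs.IsRightDescent w s
  · have h := hρ.apply_simpleRoot_nonneg (cs.isRightDescent_iff_not_isRightDescent_mul.mp hs)
    rw [linearRep_apply_mul, hρ.simple_apply_simpleRoot, map_neg, neg_nonneg] at h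
    exact .inr h
  · exact .inl (hρ.apply_simpleRoot_nonneg hs)

/-- A root of minimal height below `1` would, after reflecting in a simple root `α_r` with
`⟨α_r, γ⟩ > 0`, give a positive root of smaller height, unless it is a multiple of `α_r`. -/
theorem one_le_height [Finite W] (hρ : IsReflectionRep cs ρ) {w₀ : W} {s : S}
    (hw₀ : 0 ≤ ρ w₀ (simpleRoot s)) : 1 ≤ height (ρ w₀ (simpleRoot s)) := by
  by_contra! hlt₀
  obtain ⟨w, ⟨hw, hlt⟩, hmin⟩ := Set.exists_min_image
    {w : W | 0 ≤ ρ w (simpleRoot s) ∧ height (ρ w (simpleRoot s)) < 1}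
    (fun w => height (ρ w (simpleRoot s))) (Set.toFinite _) ⟨w₀, hw₀, hlt₀⟩
  set γ := ρ w (simpleRoot s) with hγ
  obtain ⟨r, hr⟩ : ∃ r, 0 < γ r * bform M (simpleRoot r) γ := by
    by_contra! h
    have hγγ : bform M γ γ ≤ 0 := by
      rw [bform_eq_sum]
      exact Finset.sum_nonpos fun r _ => h r
    rw [hρ.bform_map, bform_simpleRoot_self] at hγγ
    linarith
  have hc : 0 < bform M (simpleRoot r) γ := pos_of_mul_pos_right hr (hw r)
  have hδ : ρ (cs.simple r * w) (simpleRoot s) =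
      γ - (2 * bform M (simpleRoot r) γ) • simpleRoot r := by
    rw [linearRep_apply_mul, hρ]
  have hheight : height (ρ (cs.simple r * w) (simpleRoot s)) < height γ := by
    rw [hδ, map_sub, map_smul, height_simpleRoot, smul_eq_mul]
    linarith
  rcases hρ.apply_simpleRoot_nonneg_or_nonpos (cs.simple r * w) s with hδ₀ | hδ₀
  · exact (hmin _ ⟨hδ₀, hheight.trans hlt⟩).not_gt hheight
  have hγ_eq : γ = γ r • simpleRoot r := by
    ext i
    rcases eq_or_ne i r with rfl | hi
    · simp [simpleRoot]
    · have := Finsupp.le_def.mp hδ₀ i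
      rw [hδ] at this
      simp [simpleRoot, hi.symm] at this
      simp [simpleRoot, hi.symm, le_antisymm this (hw i)]
  have hγr₁ : γ r = 1 := by
    have h := hρ.bform_map w (simpleRoot s) (simpleRoot s)
    rw [← hγ, hγ_eq] at h
    simp only [map_smul, LinearMap.smul_apply, smul_eq_mul, bform_simpleRoot_self] at h
    nlinarith
  rw [hγ_eq, hγr₁, one_smul, height_simpleRoot] at hlt
  exact hlt.false

lemma inv_mul_apply_simpleRoot_nonneg_and_mem_supported (hρ : IsReflectionRep cs ρ) {u v : W}
    {s : S} {Y : Set S}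
    (hu : 0 ≤ ρ u (simpleRoot s)) (hv : ∀ t ∈ Y, 0 ≤ ρ v (simpleRoot t))
    (hconj : v⁻¹ * u * cs.simple s * (v⁻¹ * u)⁻¹ ∈ Subgroup.closure (cs.simple '' Y)) :
    0 ≤ ρ (v⁻¹ * u) (simpleRoot s) ∧ ρ (v⁻¹ * u) (simpleRoot s) ∈ Finsupp.supported ℝ ℝ Y := by
  set β := ρ (v⁻¹ * u) (simpleRoot s) with hβ
  have hβY : β ∈ Finsupp.supported ℝ ℝ Y := by
    have h := hρ.apply_sub_self_mem_supported hconj β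
    rw [hρ.conj_simple_apply, ← hβ, hρ.bform_map, bform_simpleRoot_self] at h
    have h2 : (-2 : ℝ) • β ∈ Finsupp.supported ℝ ℝ Y := by convert h using 1; module
    exact (Submodule.smul_mem_iff _ (by norm_num)).mp h2
  refine ⟨?_, hβY⟩
  rcases hρ.apply_simpleRoot_nonneg_or_nonpos (v⁻¹ * u) s with h | h
  · exact h
  have hvβ : ρ v β = ρ u (simpleRoot s) := by rw [hβ, ← linearRep_apply_mul, mul_inv_cancel_left]
  have h' := apply_nonneg_of_mem_supported (ρ v).toLinearMap hv (neg_nonneg.mpr h) (neg_mem hβY)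
  rw [LinearEquiv.coe_coe, map_neg, hvβ, neg_nonneg] at h'
  exact absurd (le_antisymm h' hu) (hρ.apply_simpleRoot_ne_zero u s)

lemma height_apply_simpleRoot_eq_one [Finite W] (hρ : IsReflectionRep cs ρ) {g : W} {s : S}
    {Y : Set S}
    (hβ : 0 ≤ ρ g (simpleRoot s)) (hβY : ρ g (simpleRoot s) ∈ Finsupp.supported ℝ ℝ Y)
    (hY : ∀ t ∈ Y, 0 ≤ ρ g⁻¹ (simpleRoot t)) : height (ρ g (simpleRoot s)) = 1 := by
  refine le_antisymm ?_ (hρ.one_le_height hβ)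
  set β := ρ g (simpleRoot s) with hβ_def
  calc height β = β.sum fun _ c => c := height_apply β
    _ ≤ β.sum fun t c => c * height (ρ g⁻¹ (simpleRoot t)) :=
      Finset.sum_le_sum fun t ht =>
        le_mul_of_one_le_right (hβ t) (hρ.one_le_height (hY t (hβY ht)))
    _ = height (ρ g⁻¹ β) := by
      conv_rhs => rw [← sum_smul_simpleRoot β]
      simp [Finsupp.sum]
    _ = 1 := by rw [hβ_def, linearRep_inv_apply_apply, height_simpleRoot]

lemma apply_eq_self_of_bform_eq_zero (hρ : IsReflectionRep cs ρ) {u : W} {X : Set S}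
    {z : S →₀ ℝ} (hz : ∀ s ∈ X, bform M (ρ u (simpleRoot s)) z = 0) :
    ∀ g ∈ (Subgroup.closure (cs.simple '' X)).map (MulAut.conj u).toMonoidHom, ρ g z = z := by
  suffices (Subgroup.closure (cs.simple '' X)).map (MulAut.conj u).toMonoidHom ≤
      (MulAction.stabilizer ((S →₀ ℝ) ≃ₗ[ℝ] (S →₀ ℝ)) z).comap ρ from fun g hg => this hg
  rw [Subgroup.map_le_iff_le_comap, Subgroup.closure_le]
  rintro _ ⟨s, hs, rfl⟩
  rw [SetLike.mem_coe, Subgroup.mem_comap, Subgroup.mem_comap, MulEquiv.coe_toMonoidHom,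
    MulAut.conj_apply, MulAction.mem_stabilizer_iff, LinearEquiv.smul_def, hρ.conj_simple_apply, hz s hs, mul_zero, zero_smul, sub_zero]

end IsReflectionRep

theorem statement12_general
    (M : CoxeterMatrix S) (cs : CoxeterSystem M W) [Finite W]
    (ρ : W →* ((S →₀ ℝ) ≃ₗ[ℝ] (S →₀ ℝ)))
    (hρ : ∀ (s : S) (v : S →₀ ℝ),
      ρ (cs.simple s) v = v - (2 * bform M (simpleRoot s) v) • simpleRoot s)
    (o : S →₀ ℝ) (ho : ∀ t : S, bform M o (simpleRoot t) = 1)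
    (u v : W) (X Y : Set S)
    (humin : ∀ g ∈ Subgroup.closure (cs.simple '' X), cs.length u ≤ cs.length (u * g))
    (hvmin : ∀ g ∈ Subgroup.closure (cs.simple '' Y), cs.length v ≤ cs.length (v * g))
    (hconj : Subgroup.map (MulAut.conj u).toMonoidHom (Subgroup.closure (cs.simple '' X)) =
      Subgroup.map (MulAut.conj v).toMonoidHom (Subgroup.closure (cs.simple '' Y))) :
    (∀ s ∈ X, bform M (ρ u (simpleRoot s)) (ρ v o - ρ u o) = 0) ∧
    (∀ g ∈ Subgroup.map (MulAut.conj u).toMonoidHom (Subgroup.closure (cs.simple '' X)),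
      ρ g (ρ v o - ρ u o) = ρ v o - ρ u o) := by
  have hρ' : IsReflectionRep cs ρ := hρ
  have hu : ∀ s ∈ X, 0 ≤ ρ u (simpleRoot s) := fun s hs =>
    hρ'.apply_simpleRoot_nonneg (cs.not_isRightDescent_of_forall_length_le humin hs)
  have hv : ∀ t ∈ Y, 0 ≤ ρ v (simpleRoot t) := fun t ht =>
    hρ'.apply_simpleRoot_nonneg (cs.not_isRightDescent_of_forall_length_le hvmin ht)
  have hheight : ∀ s ∈ X, height (ρ (v⁻¹ * u) (simpleRoot s)) = 1 := by
    intro s hs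
    obtain ⟨hβ, hβY⟩ := hρ'.inv_mul_apply_simpleRoot_nonneg_and_mem_supported (hu s hs) hv
      (conj_mem_of_map_conj_eq hconj (Subgroup.subset_closure ⟨s, hs, rfl⟩))
    refine hρ'.height_apply_simpleRoot_eq_one hβ hβY fun t ht => ?_
    rw [mul_inv_rev, inv_inv]
    exact (hρ'.inv_mul_apply_simpleRoot_nonneg_and_mem_supported (hv t ht) hu
      (conj_mem_of_map_conj_eq hconj.symm (Subgroup.subset_closure ⟨t, ht, rfl⟩))).1
  have horth : ∀ s ∈ X, bform M (ρ u (simpleRoot s)) (ρ v o - ρ u o) = 0 := by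
    intro s hs
    rw [map_sub, hρ'.bform_map, ← hρ'.bform_map v⁻¹, linearRep_inv_apply_apply ρ,
      ← linearRep_apply_mul, bform_eq_height ho, bform_eq_height ho, hheight s hs,
      height_simpleRoot, sub_self]
  exact ⟨horth, hρ'.apply_eq_self_of_bform_eq_zero horth⟩

/-- Let `Γ` be of spherical type, `u, v ∈ W`, `X, Y ⊆ S` with `u`
`(∅,X)`-minimal, `v` `(∅,Y)`-minimal and `u W_X u⁻¹ = v W_Y v⁻¹`.  Then
`⟨u(α_s), v(o) − u(o)⟩ = 0` for every `s ∈ X`; equivalently, every element of the common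
subgroup `u W_X u⁻¹ = v W_Y v⁻¹` fixes the vector `v(o) − u(o)`. -/
theorem statement12
    (M : CoxeterMatrix S) (cs : CoxeterSystem M W) [Finite W]
    (ρ : W →* ((S →₀ ℝ) ≃ₗ[ℝ] (S →₀ ℝ)))
    (hρ : ∀ (s : S) (v : S →₀ ℝ),
      ρ (cs.simple s) v = v - (2 * bform M (simpleRoot s) v) • simpleRoot s)
    (hρinj : Function.Injective ρ)
    (hρform : ∀ (w : W) (x y : S →₀ ℝ), bform M (ρ w x) (ρ w y) = bform M x y)
    (o : S →₀ ℝ) (ho : ∀ t : S, bform M o (simpleRoot t) = 1)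
    (u v : W) (X Y : Set S)
    (humin : ∀ g ∈ Subgroup.closure (cs.simple '' X), cs.length u ≤ cs.length (u * g))
    (hvmin : ∀ g ∈ Subgroup.closure (cs.simple '' Y), cs.length v ≤ cs.length (v * g))
    (hconj : Subgroup.map (MulAut.conj u).toMonoidHom (Subgroup.closure (cs.simple '' X)) =
      Subgroup.map (MulAut.conj v).toMonoidHom (Subgroup.closure (cs.simple '' Y))) :
    (∀ s ∈ X, bform M (ρ u (simpleRoot s)) (ρ v o - ρ u o) = 0) ∧
    (∀ g ∈ Subgroup.map (MulAut.conj u).toMonoidHom (Subgroup.closure (cs.simple '' X)),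
      ρ g (ρ v o - ρ u o) = ρ v o - ρ u o) :=
  statement12_general M cs ρ hρ o ho u v X Y humin hvmin hconj
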